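/- arXiv:1309.6260 — 3 statements merged into one kernel-verified Lean document; each statement's English description precedes it below -/
import Mathlib

section
/- Let T > 2π and let v : [0,T] → ℝ be continuous with v(0) = −1, |v(T)| = 1, |v(θ)| < 1 for all θ ∈ (0,T), and v(θ + 2π) ≠ v(θ) for all θ ∈ [0, T − 2π]. Then v(T) = 1. -/
/-- If `T > 2π` and `v : [0,T] → ℝ` is continuous with `v 0 = -1`, `|v T| = 1`,
`|v θ| < 1` on `(0,T)`, and `v (θ + 2π) ≠ v θ` on `[0, T - 2π]`, then `v T = 1`. -/
theorem stmt2 (T : ℝ) (hT : 2 * Real.pi < T) (v : ℝ → ℝ)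
    (hcont : ContinuousOn v (Set.Icc (0 : ℝ) T))
    (h0 : v 0 = -1)
    (hend : |v T| = 1)
    (hlt : ∀ θ ∈ Set.Ioo (0 : ℝ) T, |v θ| < 1)
    (hne : ∀ θ ∈ Set.Icc (0 : ℝ) (T - 2 * Real.pi), v (θ + 2 * Real.pi) ≠ v θ) :
    v T = 1 := by
  have hpi : (0 : ℝ) < 2 * Real.pi := by positivity
  rcases abs_eq (by norm_num : (0:ℝ) ≤ 1) |>.mp hend with h1 | h1
  · exact h1
  exfalso
  -- g θ = v (θ + 2π) - v θ
  set g : ℝ → ℝ := fun θ => v (θ + 2 * Real.pi) - v θ with hg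
  have hsub : (0:ℝ) ≤ T - 2 * Real.pi := by linarith
  have hgcont : ContinuousOn g (Set.Icc 0 (T - 2 * Real.pi)) := by
    apply ContinuousOn.sub
    · apply (hcont.comp (by continuity : Continuous fun θ : ℝ => θ + 2 * Real.pi).continuousOn)
      intro x hx
      simp only [Set.mem_Icc]
      constructor <;> [linarith [hx.1, hpi.le]; linarith [hx.2]]
    · exact hcont.mono (fun x hx => ⟨hx.1, by linarith [hx.2]⟩)
  have h2pi_mem : (2 * Real.pi) ∈ Set.Ioo (0:ℝ) T := ⟨hpi, hT⟩
  have hTm_mem : (T - 2 * Real.pi) ∈ Set.Ioo (0:ℝ) T := ⟨by linarith, by linarith⟩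
  have hg0 : 0 < g 0 := by
    have := hlt _ h2pi_mem
    have h2 : -1 < v (2 * Real.pi) := (abs_lt.mp this).1
    simp only [hg, zero_add, h0]
    linarith
  have hgT : g (T - 2 * Real.pi) < 0 := by
    have := hlt _ hTm_mem
    have h2 : -1 < v (T - 2 * Real.pi) := (abs_lt.mp this).1
    have harith : T - 2 * Real.pi + 2 * Real.pi = T := by ring
    simp only [hg, harith, h1]
    linarith
  have := intermediate_value_Icc' hsub hgcont
  have h0mem : (0:ℝ) ∈ Set.Icc (g (T - 2 * Real.pi)) (g 0) := ⟨le_of_lt hgT, le_of_lt hg0⟩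
  obtain ⟨θ, hθ, hθ0⟩ := this h0mem
  exact hne θ hθ (by simpa [hg, sub_eq_zero] using hθ0)
end

section
/- There is no pair (T, v) with T > 3π and v : [0,T] → [−1,1] continuous such that all of the following hold: |v(0)| = 1, |v(T)| = 1, |v(θ)| < 1 for all θ ∈ (0,T), v(θ + π) ≠ −v(θ) for all θ ∈ [0, T − π], and v(θ + 2π) ≠ v(θ) for all θ ∈ [0, T − 2π]. -/
private lemma ivt0 {f : ℝ → ℝ} {a b : ℝ} (hab : a ≤ b)
    (hf : ContinuousOn f (Set.Icc a b))
    (h1 : f a ≤ 0) (h2 : 0 ≤ f b) : ∃ x ∈ Set.Icc a b, f x = 0 := by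
  obtain ⟨x, hx, hfx⟩ := intermediate_value_Icc hab hf (Set.mem_Icc.mpr ⟨h1, h2⟩)
  exact ⟨x, hx, hfx⟩

private lemma ivt0' {f : ℝ → ℝ} {a b : ℝ} (hab : a ≤ b)
    (hf : ContinuousOn f (Set.Icc a b))
    (h1 : 0 ≤ f a) (h2 : f b ≤ 0) : ∃ x ∈ Set.Icc a b, f x = 0 := by
  obtain ⟨x, hx, hfx⟩ := intermediate_value_Icc' hab hf (Set.mem_Icc.mpr ⟨h2, h1⟩)
  exact ⟨x, hx, hfx⟩

/-- There is no pair `(T, v)` with `T > 3π` and `v : [0,T] → [-1,1]` continuous such that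
`|v 0| = 1`, `|v T| = 1`, `|v θ| < 1` on `(0,T)`, `v (θ + π) ≠ -v θ` on `[0, T - π]`, and
`v (θ + 2π) ≠ v θ` on `[0, T - 2π]`. -/
theorem stmt4 :
    ¬ ∃ (T : ℝ) (v : ℝ → ℝ),
      3 * Real.pi < T ∧
      ContinuousOn v (Set.Icc (0 : ℝ) T) ∧
      (∀ θ ∈ Set.Icc (0 : ℝ) T, v θ ∈ Set.Icc (-1 : ℝ) 1) ∧
      |v 0| = 1 ∧
      |v T| = 1 ∧
      (∀ θ ∈ Set.Ioo (0 : ℝ) T, |v θ| < 1) ∧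
      (∀ θ ∈ Set.Icc (0 : ℝ) (T - Real.pi), v (θ + Real.pi) ≠ -v θ) ∧
      (∀ θ ∈ Set.Icc (0 : ℝ) (T - 2 * Real.pi), v (θ + 2 * Real.pi) ≠ v θ) := by
  rintro ⟨T, v, hT, hcont, _, h0, hTv, hint, hπ, h2π⟩
  have hpi := Real.pi_pos
  -- interior strict bounds
  have hvπ : |v Real.pi| < 1 := hint _ ⟨hpi, by linarith⟩
  have hv2π : |v (2 * Real.pi)| < 1 := hint _ ⟨by linarith, by linarith⟩
  have hvTπ : |v (T - Real.pi)| < 1 := hint _ ⟨by linarith, by linarith⟩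
  have hvT2π : |v (T - 2 * Real.pi)| < 1 := hint _ ⟨by linarith, by linarith⟩
  rw [abs_lt] at hvπ hv2π hvTπ hvT2π
  -- continuity of the shifted differences
  have mapsf : ∀ c : ℝ, 0 ≤ c → c ≤ T →
      Set.MapsTo (fun θ : ℝ => θ + c) (Set.Icc 0 (T - c)) (Set.Icc 0 T) := by
    intro c hc hcT θ hθ
    obtain ⟨h1, h2⟩ := hθ
    refine ⟨?_, ?_⟩ <;> · show _ ≤ _; simp only []; linarith
  have subf : ∀ c : ℝ, 0 ≤ c → Set.Icc (0:ℝ) (T - c) ⊆ Set.Icc 0 T := by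
    intro c hc θ ⟨h1, h2⟩; exact ⟨h1, by linarith⟩
  have hcf : ContinuousOn (fun θ => v (θ + Real.pi) + v θ) (Set.Icc 0 (T - Real.pi)) :=
    (hcont.comp (continuous_add_right _).continuousOn
      (mapsf _ hpi.le (by linarith))).add (hcont.mono (subf _ hpi.le))
  have hcg : ContinuousOn (fun θ => v (θ + 2 * Real.pi) - v θ) (Set.Icc 0 (T - 2 * Real.pi)) :=
    (hcont.comp (continuous_add_right _).continuousOn
      (mapsf _ (by linarith) (by linarith))).sub (hcont.mono (subf _ (by linarith)))
  have hTππ : (T - Real.pi) + Real.pi = T := by ring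
  have hT2π2π : (T - 2 * Real.pi) + 2 * Real.pi = T := by ring
  have h0' := (abs_eq (by norm_num : (0:ℝ) ≤ 1)).mp h0
  have hT' := (abs_eq (by norm_num : (0:ℝ) ≤ 1)).mp hTv
  have fzero : ¬ ∃ x ∈ Set.Icc (0:ℝ) (T - Real.pi), v (x + Real.pi) + v x = 0 := by
    rintro ⟨x, hx, hfx⟩
    exact hπ x hx (by linarith)
  have gzero : ¬ ∃ x ∈ Set.Icc (0:ℝ) (T - 2 * Real.pi), v (x + 2 * Real.pi) - v x = 0 := by
    rintro ⟨x, hx, hgx⟩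
    exact h2π x hx (by linarith)
  rcases h0' with h0p | h0n <;> rcases hT' with hTp | hTn
  · -- v 0 = 1, v T = 1 : use g
    exact gzero (ivt0 (by linarith) hcg
      (by show v (0 + 2 * Real.pi) - v 0 ≤ 0; rw [zero_add, h0p]; linarith)
      (by show 0 ≤ v ((T - 2 * Real.pi) + 2 * Real.pi) - v (T - 2 * Real.pi); rw [hT2π2π, hTp]; linarith))
  · -- v 0 = 1, v T = -1 : use f
    exact fzero (ivt0' (by linarith) hcf
      (by show 0 ≤ v (0 + Real.pi) + v 0; rw [zero_add, h0p]; linarith)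
      (by show v ((T - Real.pi) + Real.pi) + v (T - Real.pi) ≤ 0; rw [hTππ, hTn]; linarith))
  · -- v 0 = -1, v T = 1 : use f
    exact fzero (ivt0 (by linarith) hcf
      (by show v (0 + Real.pi) + v 0 ≤ 0; rw [zero_add, h0n]; linarith)
      (by show 0 ≤ v ((T - Real.pi) + Real.pi) + v (T - Real.pi); rw [hTππ, hTp]; linarith))
  · -- v 0 = -1, v T = -1 : use g
    exact gzero (ivt0' (by linarith) hcg
      (by show 0 ≤ v (0 + 2 * Real.pi) - v 0; rw [zero_add, h0n]; linarith)
      (by show v ((T - 2 * Real.pi) + 2 * Real.pi) - v (T - 2 * Real.pi) ≤ 0; rw [hT2π2π, hTn]; linarith))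
end

section
/- Let ℤ act on ℝ × [−1,1] by n · (θ, z) = (θ + nπ, (−1)ⁿ z), let M be the quotient topological space and p : ℝ × [−1,1] → M the quotient map. There is no pair (T, v) with T > 3π and v : [0,T] → [−1,1] continuous such that |v(0)| = 1, |v(T)| = 1, |v(θ)| < 1 for all θ ∈ (0,T), and the map θ ↦ p(θ, v(θ)) is injective on [0,T]. -/
/-!
If `v (c + nπ) = (-1)ⁿ v c` for some `c` and some `n ≥ 1`, the arc passes twice through the
same point of the band. Choose `n ∈ {1, 2}` with `(-1)ⁿ = v 0 · v T`; then
`g s = v T · v (s + nπ) - v 0 · v s` is negative at `s = 0` and positive at `s = T - nπ`,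
because `|v| = 1` at the ends and `|v| < 1` at `nπ` and `T - nπ`, which are interior as soon as
`T > 2π`. A zero of `g` is such a `c`.
-/

/-- The relation on the strip `ℝ × [-1,1]` induced by the ℤ-action
`n • (θ, z) = (θ + nπ, (-1)ⁿ z)`: two points are related iff one is in the
ℤ-orbit of the other. -/
def mobiusRel (x y : ℝ × (Set.Icc (-1 : ℝ) 1)) : Prop :=
  ∃ n : ℤ, y.1 = x.1 + n * Real.pi ∧ (y.2 : ℝ) = (-1 : ℝ) ^ n * (x.2 : ℝ)

/-- The Möbius band, as the quotient of the strip `ℝ × [-1,1]` by the ℤ-action. -/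
def MobiusBand : Type := Quot mobiusRel

/-- The quotient map `p : ℝ × [-1,1] → M`. -/
def mobiusProj : ℝ × (Set.Icc (-1 : ℝ) 1) → MobiusBand := Quot.mk mobiusRel

open Set Real

theorem mobiusProj_eq_of_shift (θ : ℝ) (n : ℤ) (z z' : Icc (-1 : ℝ) 1)
    (h : (z' : ℝ) = (-1) ^ n * z) : mobiusProj (θ, z) = mobiusProj (θ + n * π, z') :=
  Quot.sound ⟨n, rfl, h⟩

theorem exists_neg_one_zpow_eq_of_abs_eq_one {ε : ℝ} (hε : |ε| = 1) :
    ∃ n : ℤ, 0 < n ∧ n ≤ 2 ∧ (-1 : ℝ) ^ n = ε := by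
  rcases (abs_eq zero_le_one).mp hε with rfl | rfl
  · exact ⟨2, by norm_num, le_rfl, by norm_num⟩
  · exact ⟨1, by norm_num, by norm_num, by norm_num⟩

theorem exists_shift_eq_mul_of_abs_eq_one {v : ℝ → ℝ} {T d : ℝ}
    (hv : ContinuousOn v (Icc 0 T)) (hd : 0 < d) (hdT : d < T)
    (h0 : |v 0| = 1) (hT : |v T| = 1) (hint : ∀ θ ∈ Ioo 0 T, |v θ| < 1) :
    ∃ c ∈ Icc 0 (T - d), v (c + d) = v 0 * v T * v c := by
  have hsq0 : v 0 ^ 2 = 1 := by rw [← sq_abs, h0, one_pow]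
  have hsqT : v T ^ 2 = 1 := by rw [← sq_abs, hT, one_pow]
  set g : ℝ → ℝ := fun s ↦ v T * v (s + d) - v 0 * v s
  have hg : ContinuousOn g (Icc 0 (T - d)) := by
    refine (continuousOn_const.mul (hv.comp (by fun_prop) fun s hs ↦ ?_)).sub
      (continuousOn_const.mul (hv.mono (Icc_subset_Icc le_rfl (by linarith))))
    exact ⟨by linarith [hs.1], by linarith [hs.2]⟩
  have hg0 : g 0 < 0 := by
    have : v T * v d < 1 := (le_abs_self _).trans_lt <| by
      rw [abs_mul, hT, one_mul]; exact hint d ⟨hd, hdT⟩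
    simp only [g, zero_add]
    nlinarith
  have hgT : 0 < g (T - d) := by
    have : v 0 * v (T - d) < 1 := (le_abs_self _).trans_lt <| by
      rw [abs_mul, h0, one_mul]; exact hint (T - d) ⟨by linarith, by linarith⟩
    simp only [g, sub_add_cancel]
    nlinarith
  obtain ⟨c, hc, hgc⟩ := intermediate_value_Icc (by linarith) hg ⟨hg0.le, hgT.le⟩
  refine ⟨c, hc, ?_⟩
  simp only [g] at hgc
  linear_combination v T * hgc - v (c + d) * hsqT

/-- There is no pair `(T, v)` with `T > 3π` and `v : [0,T] → [-1,1]` continuous such that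
`|v 0| = 1`, `|v T| = 1`, `|v θ| < 1` on `(0,T)`, and `θ ↦ p (θ, v θ)` is injective
on `[0,T]`. -/
theorem stmt5 :
    ¬ ∃ (T : ℝ) (v : ℝ → ℝ),
      3 * Real.pi < T ∧
      ContinuousOn v (Set.Icc (0 : ℝ) T) ∧
      (∀ θ ∈ Set.Icc (0 : ℝ) T, v θ ∈ Set.Icc (-1 : ℝ) 1) ∧
      |v 0| = 1 ∧
      |v T| = 1 ∧
      (∀ θ ∈ Set.Ioo (0 : ℝ) T, |v θ| < 1) ∧
      (∀ θ₁ ∈ Set.Icc (0 : ℝ) T, ∀ θ₂ ∈ Set.Icc (0 : ℝ) T,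
        ∀ z₁ z₂ : Set.Icc (-1 : ℝ) 1, (z₁ : ℝ) = v θ₁ → (z₂ : ℝ) = v θ₂ →
          mobiusProj (θ₁, z₁) = mobiusProj (θ₂, z₂) → θ₁ = θ₂) := by
  rintro ⟨T, v, hT, hv, hmem, h0, hT1, hint, hinj⟩
  obtain ⟨n, hn0, hn2, hsign⟩ :=
    exists_neg_one_zpow_eq_of_abs_eq_one (by rw [abs_mul, h0, hT1, one_mul] : |v 0 * v T| = 1)
  have hnπ : 0 < (n : ℝ) * π := mul_pos (by exact_mod_cast hn0) pi_pos
  have hnπT : (n : ℝ) * π < T := by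
    have : (n : ℝ) ≤ 2 := by exact_mod_cast hn2
    nlinarith [pi_pos]
  obtain ⟨c, hc, hvc⟩ := exists_shift_eq_mul_of_abs_eq_one hv hnπ hnπT h0 hT1 hint
  have hc₁ : c ∈ Icc 0 T := ⟨hc.1, by linarith [hc.2]⟩
  have hc₂ : c + n * π ∈ Icc 0 T := ⟨by linarith [hc.1], by linarith [hc.2]⟩
  have hproj := mobiusProj_eq_of_shift c n ⟨v c, hmem c hc₁⟩ ⟨_, hmem _ hc₂⟩
    (by rw [hsign]; exact hvc)
  linarith [hinj c hc₁ _ hc₂ _ _ rfl rfl hproj]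
end
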